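/- arXiv:1606.04253 — 5 statements merged into one kernel-verified Lean document; each statement's English description precedes it below -/
import Mathlib

section
/- Let A be a finite-dimensional unital associative algebra over ℂ with multiplication μ : A × A → A, and let φ : A × A → A be a unital bilinear map. Then φ is a degeneration of μ (φ ⊴ μ) if and only if φ is an algebraic degeneration of μ (φ ⊴ₐ μ). -/
open scoped BigOperators

/-- The bilinear map `ℂⁿ × ℂⁿ → ℂⁿ` induced by a structure-constant array `μ`
(the coordinate description of a bilinear map on an `n`-dimensional space). -/
noncomputable def mulOf {n : ℕ} (μ : Fin n → Fin n → Fin n → ℂ)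
    (x y : Fin n → ℂ) : Fin n → ℂ :=
  fun k => ∑ i, ∑ j, μ i j k * x i * y j

/-- A bilinear map is unital if it has a two-sided identity element. -/
def IsUnitalBil {n : ℕ} (μ : Fin n → Fin n → Fin n → ℂ) : Prop :=
  ∃ e : Fin n → ℂ, ∀ x : Fin n → ℂ, mulOf μ e x = x ∧ mulOf μ x e = x

/-- Associativity of the bilinear map given by the array `μ`. -/
def IsAssocBil {n : ℕ} (μ : Fin n → Fin n → Fin n → ℂ) : Prop :=
  ∀ x y z : Fin n → ℂ, mulOf μ (mulOf μ x y) z = mulOf μ x (mulOf μ y z)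

/-- The set of restrictions `(x, y) ↦ H (μ (F x, G y))` of the bilinear map `μ`,
for linear maps `F G H`, written in coordinates. -/
def BilRestrictions {n : ℕ} (μ : Fin n → Fin n → Fin n → ℂ) :
    Set (Fin n → Fin n → Fin n → ℂ) :=
  {S | ∃ F G H : Matrix (Fin n) (Fin n) ℂ,
    S = fun i j k => ∑ a, ∑ b, ∑ c, F a i * G b j * H k c * μ a b c}

/-- The `GL(V)`-orbit `{(x, y) ↦ g (μ (g⁻¹ x, g⁻¹ y)) : g ∈ GL(V)}` of the
bilinear map `μ`, written in coordinates. -/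
def BilOrbit {n : ℕ} (μ : Fin n → Fin n → Fin n → ℂ) :
    Set (Fin n → Fin n → Fin n → ℂ) :=
  {S | ∃ g : GL (Fin n) ℂ,
    S = fun i j k => ∑ a, ∑ b, ∑ c,
      (↑g⁻¹ : Matrix (Fin n) (Fin n) ℂ) a i *
      (↑g⁻¹ : Matrix (Fin n) (Fin n) ℂ) b j *
      (↑g : Matrix (Fin n) (Fin n) ℂ) k c * μ a b c}


/-!
Let `e` be the unit of `φ`. For `S` near `φ`, left and right multiplication `L`, `R` by `e` in `S`
are invertible, and the twist `S ↦ R⁻¹ S(·, L⁻¹ R ·)` makes `e` a unit of `S`, keeps restrictions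
of `μ` restrictions of `μ`, is continuous at `φ` and fixes `φ`. So `φ` is a limit of unital
restrictions of `μ`. But a unital restriction `S(x, y) = H (F x · G y)` of a unital associative
algebra is isomorphic to it: if `e` is the unit of `S` and `u = F e`, then `u` is invertible and
`g = u⁻¹ F` satisfies `g (S(x, y)) = g x · g y`.
-/

open Matrix

namespace BilinearDegeneration

variable {n : ℕ}

noncomputable def restrict (F G H : Matrix (Fin n) (Fin n) ℂ) (S : Fin n → Fin n → Fin n → ℂ) :
    Fin n → Fin n → Fin n → ℂ :=
  fun i j k => ∑ a, ∑ b, ∑ c, F a i * G b j * H k c * S a b c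

theorem mulOf_restrict (F G H : Matrix (Fin n) (Fin n) ℂ) (S : Fin n → Fin n → Fin n → ℂ)
    (x y : Fin n → ℂ) :
    mulOf (restrict F G H S) x y = H *ᵥ mulOf S (F *ᵥ x) (G *ᵥ y) := by
  funext k
  simp only [mulOf, restrict, mulVec, dotProduct, Finset.sum_mul, Finset.mul_sum]
  conv_lhs => enter [2, i, 2, j]; rw [Finset.sum_comm_cycle]
  conv_lhs => rw [Finset.sum_comm_cycle]
  conv_lhs => enter [2, c]; rw [Finset.sum_comm]
  conv_lhs => enter [2, c, 2, j]; rw [← Finset.sum_comm_cycle]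
  conv_lhs => enter [2, c]; rw [← Finset.sum_comm_cycle]
  ac_rfl

theorem mulOf_single_single (S : Fin n → Fin n → Fin n → ℂ) (i j : Fin n) :
    mulOf S (Pi.single i 1) (Pi.single j 1) = S i j := by
  funext k
  simp [mulOf, Pi.single_apply]

theorem ext_mulOf {S T : Fin n → Fin n → Fin n → ℂ} (h : ∀ x y, mulOf S x y = mulOf T x y) :
    S = T := by
  funext i j
  rw [← mulOf_single_single S, h, mulOf_single_single]

theorem restrict_restrict (F G H F' G' H' : Matrix (Fin n) (Fin n) ℂ)
    (S : Fin n → Fin n → Fin n → ℂ) :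
    restrict F G H (restrict F' G' H' S) = restrict (F' * F) (G' * G) (H * H') S :=
  ext_mulOf fun x y => by simp only [mulOf_restrict, mulVec_mulVec]

theorem restrict_one (S : Fin n → Fin n → Fin n → ℂ) : restrict 1 1 1 S = S :=
  ext_mulOf fun x y => by simp only [mulOf_restrict, one_mulVec]

theorem continuous_restrict :
    Continuous fun p : Matrix (Fin n) (Fin n) ℂ × Matrix (Fin n) (Fin n) ℂ ×
        Matrix (Fin n) (Fin n) ℂ × (Fin n → Fin n → Fin n → ℂ) =>
      restrict p.1 p.2.1 p.2.2.1 p.2.2.2 := by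
  unfold restrict
  fun_prop

theorem mem_bilRestrictions_iff {μ S : Fin n → Fin n → Fin n → ℂ} :
    S ∈ BilRestrictions μ ↔ ∃ F G H, S = restrict F G H μ :=
  Iff.rfl

theorem bilOrbit_subset_bilRestrictions (μ : Fin n → Fin n → Fin n → ℂ) :
    BilOrbit μ ⊆ BilRestrictions μ := by
  rintro S ⟨g, rfl⟩
  exact ⟨_, _, _, rfl⟩

theorem mem_bilOrbit_of_mulOf_eq {μ S : Fin n → Fin n → Fin n → ℂ} (g : GL (Fin n) ℂ)
    (h : ∀ x y, mulOf S x y =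
      (↑g⁻¹ : Matrix (Fin n) (Fin n) ℂ) *ᵥ mulOf μ ((g : Matrix (Fin n) (Fin n) ℂ) *ᵥ x)
        ((g : Matrix (Fin n) (Fin n) ℂ) *ᵥ y)) :
    S ∈ BilOrbit μ := by
  refine ⟨g⁻¹, ext_mulOf fun x y => ?_⟩
  change _ = mulOf (restrict _ _ _ μ) x y
  rw [h, mulOf_restrict, inv_inv]

noncomputable def lmul (S : Fin n → Fin n → Fin n → ℂ) (a : Fin n → ℂ) :
    Matrix (Fin n) (Fin n) ℂ :=
  fun k j => ∑ i, S i j k * a i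

noncomputable def rmul (S : Fin n → Fin n → Fin n → ℂ) (b : Fin n → ℂ) :
    Matrix (Fin n) (Fin n) ℂ :=
  fun k i => ∑ j, S i j k * b j

theorem lmul_mulVec (S : Fin n → Fin n → Fin n → ℂ) (a z : Fin n → ℂ) :
    lmul S a *ᵥ z = mulOf S a z := by
  funext k
  simp only [lmul, mulOf, mulVec, dotProduct, Finset.sum_mul]
  rw [Finset.sum_comm]

theorem rmul_mulVec (S : Fin n → Fin n → Fin n → ℂ) (b z : Fin n → ℂ) :
    rmul S b *ᵥ z = mulOf S z b := by
  funext k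
  simp only [rmul, mulOf, mulVec, dotProduct, Finset.sum_mul]
  exact Finset.sum_congr rfl fun i _ => Finset.sum_congr rfl fun j _ => by ring

theorem continuous_lmul (a : Fin n → ℂ) : Continuous fun S => lmul S a := by
  unfold lmul
  fun_prop

theorem continuous_rmul (b : Fin n → ℂ) : Continuous fun S => rmul S b := by
  unfold rmul
  fun_prop

theorem lmul_eq_one {S : Fin n → Fin n → Fin n → ℂ} {e : Fin n → ℂ}
    (h : ∀ x, mulOf S e x = x) : lmul S e = 1 :=
  ext_of_mulVec_single fun i => by rw [lmul_mulVec, h, one_mulVec]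

theorem rmul_eq_one {S : Fin n → Fin n → Fin n → ℂ} {e : Fin n → ℂ}
    (h : ∀ x, mulOf S x e = x) : rmul S e = 1 :=
  ext_of_mulVec_single fun i => by rw [rmul_mulVec, h, one_mulVec]

theorem mulVec_surjective_of_injective {m K : Type*} [Fintype m] [DecidableEq m] [Field K]
    {M : Matrix m m K}
    (h : Function.Injective M.mulVec) : Function.Surjective M.mulVec :=
  mulVec_surjective_iff_isUnit.2 (mulVec_injective_iff_isUnit.1 h)

theorem mulVec_injective_of_surjective {m K : Type*} [Fintype m] [DecidableEq m] [Field K]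
    {M : Matrix m m K}
    (h : Function.Surjective M.mulVec) : Function.Injective M.mulVec :=
  mulVec_injective_iff_isUnit.2 (mulVec_surjective_iff_isUnit.1 h)

section UnitalAssociative

variable {μ : Fin n → Fin n → Fin n → ℂ} {one : Fin n → ℂ}

theorem exists_inverse_of_injective_mulOf (hleft : ∀ x, mulOf μ one x = x)
    (hright : ∀ x, mulOf μ x one = x) (hassoc : IsAssocBil μ) {u : Fin n → ℂ}
    (hu : Function.Injective (mulOf μ u)) :
    ∃ w, mulOf μ u w = one ∧ mulOf μ w u = one := by
  have hu' : Function.Injective (lmul μ u).mulVec := by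
    rwa [show (lmul μ u).mulVec = mulOf μ u from funext (lmul_mulVec μ u)]
  obtain ⟨w, hw⟩ := mulVec_surjective_of_injective hu' one
  rw [lmul_mulVec] at hw
  refine ⟨w, hw, hu ?_⟩
  rw [← hassoc, hw, hleft, hright]

theorem mem_bilOrbit_of_isUnitalBil (hμ : IsUnitalBil μ) (hassoc : IsAssocBil μ)
    {S : Fin n → Fin n → Fin n → ℂ} (hS : S ∈ BilRestrictions μ) (hSu : IsUnitalBil S) :
    S ∈ BilOrbit μ := by
  obtain ⟨one, hone⟩ := hμ
  obtain ⟨F, G, H, rfl⟩ := mem_bilRestrictions_iff.1 hS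
  obtain ⟨e, he⟩ := hSu
  set u := F *ᵥ e
  set v := G *ᵥ e
  have hHr : ∀ x, H *ᵥ mulOf μ (F *ᵥ x) v = x := fun x => by
    rw [← mulOf_restrict]; exact (he x).2
  have hHl : ∀ y, H *ᵥ mulOf μ u (G *ᵥ y) = y := fun y => by
    rw [← mulOf_restrict]; exact (he y).1
  have hHinj : Function.Injective H.mulVec :=
    mulVec_injective_of_surjective fun x => ⟨_, hHr x⟩
  have hGsurj : Function.Surjective G.mulVec :=
    mulVec_surjective_of_injective fun y y' h => by
      rw [← hHl y, ← hHl y']; exact congrArg (fun z => H *ᵥ mulOf μ u z) h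
  have huinj : Function.Injective (mulOf μ u) := by
    intro z z' h
    obtain ⟨y, rfl⟩ := hGsurj z
    obtain ⟨y', rfl⟩ := hGsurj z'
    rw [← hHl y, ← hHl y', h]
  obtain ⟨w, huw, hwu⟩ := exists_inverse_of_injective_mulOf (fun x => (hone x).1)
    (fun x => (hone x).2) hassoc huinj
  -- `u · G y` and `F y · v` are both sent to `y` by `H`
  have hG : ∀ y, G *ᵥ y = mulOf μ w (mulOf μ (F *ᵥ y) v) := fun y => by
    rw [← hHinj ((hHl y).trans (hHr y).symm), ← hassoc, hwu, (hone _).1]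
  have hgg' : (H * rmul μ v * lmul μ u) * (lmul μ w * F) = 1 := by
    refine ext_of_mulVec_single fun i => ?_
    simp only [← mulVec_mulVec, lmul_mulVec, rmul_mulVec, one_mulVec]
    rw [← hassoc u w, huw, (hone _).1, hHr]
  -- `g = u⁻¹ F`, with inverse `x ↦ H (u x · v)`
  let g : GL (Fin n) ℂ := ⟨lmul μ w * F, H * rmul μ v * lmul μ u, mul_eq_one_comm.1 hgg', hgg'⟩
  refine mem_bilOrbit_of_mulOf_eq g fun x y => ?_
  change _ = (H * rmul μ v * lmul μ u) *ᵥ mulOf μ ((lmul μ w * F) *ᵥ x) ((lmul μ w * F) *ᵥ y)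
  simp only [← mulVec_mulVec, lmul_mulVec, rmul_mulVec, mulOf_restrict]
  rw [hG, ← hassoc u, ← hassoc u w, huw, (hone _).1, hassoc, hassoc]

end UnitalAssociative

section Unitalize

variable {e : Fin n → ℂ} {S : Fin n → Fin n → Fin n → ℂ}

/-- The twist `(x, y) ↦ R⁻¹ S(x, L⁻¹ R y)`, where `L` and `R` are left and right multiplication
by `e` in `S`. -/
noncomputable def unitalize (e : Fin n → ℂ) (S : Fin n → Fin n → Fin n → ℂ) :
    Fin n → Fin n → Fin n → ℂ :=
  restrict 1 ((lmul S e)⁻¹ * rmul S e) (rmul S e)⁻¹ S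

theorem isUnitalBil_unitalize (hL : IsUnit (lmul S e).det) (hR : IsUnit (rmul S e).det) :
    IsUnitalBil (unitalize e S) := by
  have hRe : ((lmul S e)⁻¹ * rmul S e) *ᵥ e = e := by
    rw [← mulVec_mulVec, rmul_mulVec, ← lmul_mulVec, mulVec_mulVec, nonsing_inv_mul _ hL,
      one_mulVec]
  refine ⟨e, fun x => ⟨?_, ?_⟩⟩
  · rw [unitalize, mulOf_restrict, one_mulVec, ← lmul_mulVec, mulVec_mulVec _ (lmul S e),
      ← Matrix.mul_assoc, mul_nonsing_inv _ hL, Matrix.one_mul, mulVec_mulVec,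
      nonsing_inv_mul _ hR, one_mulVec]
  · rw [unitalize, mulOf_restrict, one_mulVec, hRe, ← rmul_mulVec, mulVec_mulVec,
      nonsing_inv_mul _ hR, one_mulVec]

theorem unitalize_mem_bilRestrictions {μ : Fin n → Fin n → Fin n → ℂ}
    (hS : S ∈ BilRestrictions μ) : unitalize e S ∈ BilRestrictions μ := by
  obtain ⟨F, G, H, rfl⟩ := mem_bilRestrictions_iff.1 hS
  exact mem_bilRestrictions_iff.2 ⟨_, _, _, restrict_restrict _ _ _ _ _ _ μ⟩

theorem unitalize_eq_self (he : ∀ x, mulOf S e x = x ∧ mulOf S x e = x) : unitalize e S = S := by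
  rw [unitalize, lmul_eq_one fun x => (he x).1, rmul_eq_one fun x => (he x).2, inv_one,
    Matrix.one_mul, restrict_one]

theorem continuousAt_unitalize (hL : IsUnit (lmul S e).det) (hR : IsUnit (rmul S e).det) :
    ContinuousAt (unitalize e) S := by
  have hinv : ∀ {f : (Fin n → Fin n → Fin n → ℂ) → Matrix (Fin n) (Fin n) ℂ},
      Continuous f → IsUnit (f S).det → ContinuousAt (fun T => (f T)⁻¹) S := fun hf hS =>
    (continuousAt_matrix_inv _ (NormedRing.inverse_continuousAt hS.unit)).comp hf.continuousAt
  refine continuous_restrict.continuousAt.comp (f := fun T => (_, _, _, T)) ?_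
  exact continuousAt_const.prodMk (((hinv (continuous_lmul e) hL).mul
    (continuous_rmul e).continuousAt).prodMk ((hinv (continuous_rmul e) hR).prodMk
      continuousAt_id))

end Unitalize

theorem mem_closure_bilOrbit_of_mem_closure_bilRestrictions {μ φ : Fin n → Fin n → Fin n → ℂ}
    (hμ : IsUnitalBil μ) (hassoc : IsAssocBil μ) (hφ : IsUnitalBil φ)
    (h : φ ∈ closure (BilRestrictions μ)) : φ ∈ closure (BilOrbit μ) := by
  obtain ⟨e, he⟩ := hφ
  let U := {S | IsUnit (lmul S e).det ∧ IsUnit (rmul S e).det}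
  have hU : IsOpen U :=
    (Units.isOpen.preimage (continuous_lmul e).matrix_det).inter
      (Units.isOpen.preimage (continuous_rmul e).matrix_det)
  have hφU : φ ∈ U := by
    simp [U, lmul_eq_one fun x => (he x).1, rmul_eq_one fun x => (he x).2]
  rw [← unitalize_eq_self he]
  refine (continuousAt_unitalize hφU.1 hφU.2).continuousWithinAt.mem_closure
    (hU.inter_closure ⟨hφU, h⟩) ?_
  rintro S ⟨⟨hL, hR⟩, hS⟩
  exact mem_bilOrbit_of_isUnitalBil hμ hassoc (unitalize_mem_bilRestrictions hS)
    (isUnitalBil_unitalize hL hR)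

end BilinearDegeneration

/-- for a finite-dimensional unital associative algebra with
multiplication `μ` and a unital bilinear map `φ` on the same space,
`φ` is a degeneration of `μ` iff `φ` is an algebraic degeneration of `μ`. -/
theorem stmt0 {n : ℕ} (μ φ : Fin n → Fin n → Fin n → ℂ)
    (hμ_unital : IsUnitalBil μ) (hμ_assoc : IsAssocBil μ)
    (hφ_unital : IsUnitalBil φ) :
    φ ∈ closure (BilRestrictions μ) ↔ φ ∈ closure (BilOrbit μ) :=
  ⟨BilinearDegeneration.mem_closure_bilOrbit_of_mem_closure_bilRestrictions hμ_unital hμ_assoc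
      hφ_unital,
    fun h => closure_mono (BilinearDegeneration.bilOrbit_subset_bilRestrictions μ) h⟩
end

section
/- Let n ≥ 1 and let φ be a unital bilinear map on ℂⁿ. Then the border rank of φ is at most n if and only if φ is smoothable, i.e., φ lies in the closure of the GL(ℂⁿ)-orbit {(x, y) ↦ g(μ(g⁻¹x, g⁻¹y)) : g ∈ GL(ℂⁿ)} of the coordinatewise multiplication μ(x, y) = (x₁y₁, …, xₙyₙ) of ℂⁿ. -/
open scoped BigOperators

/-- `T` is a sum of `r` decomposable tensors (i.e. has rank at most `r`). -/
def rankLE {n₁ n₂ n₃ : ℕ} (T : Fin n₁ → Fin n₂ → Fin n₃ → ℂ) (r : ℕ) : Prop :=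
  ∃ u : Fin r → Fin n₁ → ℂ, ∃ v : Fin r → Fin n₂ → ℂ, ∃ w : Fin r → Fin n₃ → ℂ,
    T = fun i j k => ∑ s, u s i * v s j * w s k

/-- The border rank of a tensor: the least `r` such that `T` is a limit of
tensors of rank at most `r`. -/
noncomputable def bRank {n₁ n₂ n₃ : ℕ} (T : Fin n₁ → Fin n₂ → Fin n₃ → ℂ) : ℕ :=
  sInf {r | T ∈ closure {S | rankLE S r}}

/-- Coordinatewise multiplication of `ℂⁿ` as a structure-constant array. -/
noncomputable def diagMul (n : ℕ) : Fin n → Fin n → Fin n → ℂ :=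
  fun i j k => if i = j ∧ j = k then 1 else 0

/-!
A tensor of rank at most `n` has the form `T (x, y) = M (P x ⊙ Q y)`, where `⊙` is the
coordinatewise product. If `φ` is unital with unit `e`, the matrices `L` of `y ↦ T (e, y)` and
`R` of `x ↦ T (x, e)` are close to the identity for `T` close to `φ`. They factor as
`L = M diag(P e) Q` and `R = M diag(Q e) P`, so their invertibility forces `M`, `P`, `Q` and the
diagonals to be invertible, and then `T (R⁻¹ x, L⁻¹ y)` lies in the `GL`-orbit of `⊙`. This
normalisation is continuous at `φ` and fixes `φ`, so limits of rank-`n` tensors at `φ` become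
limits of orbit points. Conversely, every orbit point has rank at most `n`.
-/

open Matrix

section rank

variable {n₁ n₂ n₃ : ℕ}

lemma rankLE_mono {T : Fin n₁ → Fin n₂ → Fin n₃ → ℂ} {r r' : ℕ} (hT : rankLE T r)
    (h : r ≤ r') : rankLE T r' := by
  obtain ⟨d, rfl⟩ := Nat.exists_eq_add_of_le h
  obtain ⟨u, v, w, rfl⟩ := hT
  refine ⟨Fin.append u 0, Fin.append v 0, Fin.append w 0, ?_⟩
  simp [Fin.sum_univ_add]

lemma rankLE_card (T : Fin n₁ → Fin n₂ → Fin n₃ → ℂ) : rankLE T (n₁ * (n₂ * n₃)) := by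
  let σ : Fin n₁ × Fin n₂ × Fin n₃ ≃ Fin (n₁ * (n₂ * n₃)) := Fintype.equivFinOfCardEq (by simp)
  refine ⟨fun s => Pi.single (σ.symm s).1 1, fun s => Pi.single (σ.symm s).2.1 1,
    fun s => Pi.single (σ.symm s).2.2 (T (σ.symm s).1 (σ.symm s).2.1 (σ.symm s).2.2), ?_⟩
  funext i j k
  rw [← σ.sum_comp]
  simp [Fintype.sum_prod_type, Pi.single_apply]

lemma bRank_le_iff {T : Fin n₁ → Fin n₂ → Fin n₃ → ℂ} {r : ℕ} :
    bRank T ≤ r ↔ T ∈ closure {S | rankLE S r} :=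
  ⟨fun h => closure_mono (fun _ hS => rankLE_mono hS h)
      (Nat.sInf_mem (s := {r | T ∈ closure {S | rankLE S r}}) ⟨_, subset_closure (rankLE_card T)⟩),
    fun h => Nat.sInf_le h⟩

end rank

variable {n : ℕ}

/-- As a bilinear map, `tensorMap P Q M T` is `(x, y) ↦ M (T (P x, Q y))`. -/
def tensorMap (P Q M : Matrix (Fin n) (Fin n) ℂ) (T : Fin n → Fin n → Fin n → ℂ) :
    Fin n → Fin n → Fin n → ℂ :=
  fun i j k => ∑ a, ∑ b, ∑ c, P a i * Q b j * M k c * T a b c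

lemma tensorMap_tensorMap (P Q M P' Q' M' : Matrix (Fin n) (Fin n) ℂ)
    (T : Fin n → Fin n → Fin n → ℂ) :
    tensorMap P Q M (tensorMap P' Q' M' T) = tensorMap (P' * P) (Q' * Q) (M * M') T := by
  funext i j k
  simp only [tensorMap, mul_apply, Finset.sum_mul, Finset.mul_sum, ← Fintype.sum_prod_type']
  let σ : (Fin n × Fin n × Fin n × Fin n × Fin n × Fin n) ≃
      (Fin n × Fin n × Fin n × Fin n × Fin n × Fin n) :=
    { toFun := fun ⟨a, b, c, x, y, z⟩ => ⟨x, y, z, c, b, a⟩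
      invFun := fun ⟨x, y, z, c, b, a⟩ => ⟨a, b, c, x, y, z⟩
      left_inv := fun _ => rfl
      right_inv := fun _ => rfl }
  exact Fintype.sum_equiv σ _ _ fun ⟨_, _, _, _, _, _⟩ => by
    simp only [σ, Equiv.coe_fn_mk]
    ring

lemma tensorMap_one (T : Fin n → Fin n → Fin n → ℂ) : tensorMap 1 1 1 T = T := by
  funext i j k
  simp [tensorMap, one_apply]

lemma continuous_tensorMap :
    Continuous fun p : Matrix (Fin n) (Fin n) ℂ × Matrix (Fin n) (Fin n) ℂ ×
      Matrix (Fin n) (Fin n) ℂ × (Fin n → Fin n → Fin n → ℂ) =>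
      tensorMap p.1 p.2.1 p.2.2.1 p.2.2.2 := by
  unfold tensorMap
  fun_prop

lemma tensorMap_diagMul (P Q M : Matrix (Fin n) (Fin n) ℂ) :
    tensorMap P Q M (diagMul n) = fun i j k => ∑ c, P c i * Q c j * M k c := by
  funext i j k
  simp [tensorMap, diagMul, ite_and, Finset.sum_ite_eq]

lemma tensorMap_diagonal_mul_diagMul (a b : Fin n → ℂ) (P Q M : Matrix (Fin n) (Fin n) ℂ) :
    tensorMap (diagonal a * P) (diagonal b * Q) M (diagMul n) =
      tensorMap P Q (M * diagonal a * diagonal b) (diagMul n) := by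
  simp only [tensorMap_diagMul, diagonal_mul, mul_diagonal]
  funext i j k
  exact Finset.sum_congr rfl fun c _ => by ring

lemma rankLE_iff_exists_eq_tensorMap_diagMul (T : Fin n → Fin n → Fin n → ℂ) :
    rankLE T n ↔ ∃ P Q M : Matrix (Fin n) (Fin n) ℂ, T = tensorMap P Q M (diagMul n) := by
  simp only [rankLE, tensorMap_diagMul]
  constructor
  · rintro ⟨u, v, w, rfl⟩
    exact ⟨of u, of v, (of w)ᵀ, rfl⟩
  · rintro ⟨P, Q, M, rfl⟩
    exact ⟨P, Q, Mᵀ, rfl⟩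

lemma tensorMap_mem_bilOrbit {g : Matrix (Fin n) (Fin n) ℂ} (hg : IsUnit g.det)
    (μ : Fin n → Fin n → Fin n → ℂ) : tensorMap g⁻¹ g⁻¹ g μ ∈ BilOrbit μ :=
  ⟨nonsingInvUnit g hg, by rw [coe_units_inv]; rfl⟩

lemma bilOrbit_subset_rankLE : BilOrbit (diagMul n) ⊆ {S | rankLE S n} := by
  rintro S ⟨g, rfl⟩
  exact (rankLE_iff_exists_eq_tensorMap_diagMul _).2 ⟨_, _, _, rfl⟩

lemma tensorMap_inv_mem_bilOrbit {α β : Fin n → ℂ} {P Q M : Matrix (Fin n) (Fin n) ℂ}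
    (hR : IsUnit (M * diagonal β * P).det) (hL : IsUnit (M * diagonal α * Q).det) :
    tensorMap (M * diagonal β * P)⁻¹ (M * diagonal α * Q)⁻¹ 1 (tensorMap P Q M (diagMul n)) ∈
      BilOrbit (diagMul n) := by
  simp only [det_mul, IsUnit.mul_iff] at hR hL
  obtain ⟨⟨hM, hβ⟩, hP⟩ := hR
  obtain ⟨⟨-, hα⟩, hQ⟩ := hL
  set g := M * diagonal α * diagonal β
  have hg : IsUnit g.det := by simpa only [g, det_mul, IsUnit.mul_iff] using ⟨⟨hM, hα⟩, hβ⟩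
  have hgg : g * g⁻¹ = 1 := mul_nonsing_inv g hg
  have hR : P * (M * diagonal β * P)⁻¹ = diagonal α * g⁻¹ := by
    rw [Matrix.mul_inv_rev, ← Matrix.mul_assoc, mul_nonsing_inv P hP, Matrix.one_mul]
    refine inv_eq_right_inv ?_
    rwa [← Matrix.mul_assoc, Matrix.mul_assoc M, (commute_diagonal β α).eq, ← Matrix.mul_assoc]
  have hL : Q * (M * diagonal α * Q)⁻¹ = diagonal β * g⁻¹ := by
    rw [Matrix.mul_inv_rev, ← Matrix.mul_assoc, mul_nonsing_inv Q hQ, Matrix.one_mul]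
    exact inv_eq_right_inv (by rwa [← Matrix.mul_assoc])
  rw [tensorMap_tensorMap, hR, hL, Matrix.one_mul, tensorMap_diagonal_mul_diagMul]
  exact tensorMap_mem_bilOrbit hg _

section mulMatrix

variable (T : Fin n → Fin n → Fin n → ℂ) (e : Fin n → ℂ)

def leftMulMatrix : Matrix (Fin n) (Fin n) ℂ := of fun k j => ∑ i, T i j k * e i

def rightMulMatrix : Matrix (Fin n) (Fin n) ℂ := of fun k i => ∑ j, T i j k * e j

lemma leftMulMatrix_mulVec (y : Fin n → ℂ) : leftMulMatrix T e *ᵥ y = mulOf T e y := by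
  funext k
  simp only [leftMulMatrix, mulOf, mulVec, dotProduct, of_apply, Finset.sum_mul]
  exact Finset.sum_comm

lemma rightMulMatrix_mulVec (x : Fin n → ℂ) : rightMulMatrix T e *ᵥ x = mulOf T x e := by
  funext k
  simp only [rightMulMatrix, mulOf, mulVec, dotProduct, of_apply, Finset.sum_mul]
  exact Finset.sum_congr rfl fun i _ => Finset.sum_congr rfl fun j _ => by ring

lemma continuous_leftMulMatrix : Continuous fun T => leftMulMatrix T e := by
  unfold leftMulMatrix
  fun_prop

lemma continuous_rightMulMatrix : Continuous fun T => rightMulMatrix T e := by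
  unfold rightMulMatrix
  fun_prop

lemma leftMulMatrix_tensorMap_diagMul (P Q M : Matrix (Fin n) (Fin n) ℂ) :
    leftMulMatrix (tensorMap P Q M (diagMul n)) e = M * diagonal (P *ᵥ e) * Q := by
  rw [Matrix.mul_assoc]
  ext k j
  rw [mul_apply]
  simp only [leftMulMatrix, tensorMap_diagMul, of_apply, diagonal_mul, mulVec, dotProduct,
    Finset.sum_mul, Finset.mul_sum]
  rw [Finset.sum_comm]
  exact Finset.sum_congr rfl fun c _ => Finset.sum_congr rfl fun i _ => by ring

lemma rightMulMatrix_tensorMap_diagMul (P Q M : Matrix (Fin n) (Fin n) ℂ) :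
    rightMulMatrix (tensorMap P Q M (diagMul n)) e = M * diagonal (Q *ᵥ e) * P := by
  rw [Matrix.mul_assoc]
  ext k i
  rw [mul_apply]
  simp only [rightMulMatrix, tensorMap_diagMul, of_apply, diagonal_mul, mulVec, dotProduct,
    Finset.sum_mul, Finset.mul_sum]
  rw [Finset.sum_comm]
  exact Finset.sum_congr rfl fun c _ => Finset.sum_congr rfl fun j _ => by ring

end mulMatrix

lemma leftMulMatrix_eq_one {T : Fin n → Fin n → Fin n → ℂ} {e : Fin n → ℂ}
    (he : ∀ y, mulOf T e y = y) : leftMulMatrix T e = 1 :=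
  ext_iff_mulVec.2 fun y => by rw [leftMulMatrix_mulVec, he, one_mulVec]

lemma rightMulMatrix_eq_one {T : Fin n → Fin n → Fin n → ℂ} {e : Fin n → ℂ}
    (he : ∀ x, mulOf T x e = x) : rightMulMatrix T e = 1 :=
  ext_iff_mulVec.2 fun x => by rw [rightMulMatrix_mulVec, he, one_mulVec]

lemma tensorMap_inv_mulMatrix_mem_bilOrbit {T : Fin n → Fin n → Fin n → ℂ} {e : Fin n → ℂ}
    (hT : rankLE T n) (hR : IsUnit (rightMulMatrix T e).det)
    (hL : IsUnit (leftMulMatrix T e).det) :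
    tensorMap (rightMulMatrix T e)⁻¹ (leftMulMatrix T e)⁻¹ 1 T ∈ BilOrbit (diagMul n) := by
  obtain ⟨P, Q, M, rfl⟩ := (rankLE_iff_exists_eq_tensorMap_diagMul T).1 hT
  rw [rightMulMatrix_tensorMap_diagMul] at hR ⊢
  rw [leftMulMatrix_tensorMap_diagMul] at hL ⊢
  exact tensorMap_inv_mem_bilOrbit hR hL

lemma continuousAt_matrix_inv_one :
    ContinuousAt (fun A : Matrix (Fin n) (Fin n) ℂ => A⁻¹) 1 :=
  continuousAt_matrix_inv 1 (by rw [det_one]; exact NormedRing.inverse_continuousAt 1)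

lemma continuousAt_tensorMap_inv_mulMatrix {φ : Fin n → Fin n → Fin n → ℂ} {e : Fin n → ℂ}
    (hL : leftMulMatrix φ e = 1) (hR : rightMulMatrix φ e = 1) :
    ContinuousAt (fun T => tensorMap (rightMulMatrix T e)⁻¹ (leftMulMatrix T e)⁻¹ 1 T) φ := by
  have hRinv : ContinuousAt (fun T => (rightMulMatrix T e)⁻¹) φ :=
    continuousAt_matrix_inv_one.comp_of_eq (continuous_rightMulMatrix e).continuousAt hR
  have hLinv : ContinuousAt (fun T => (leftMulMatrix T e)⁻¹) φ :=
    continuousAt_matrix_inv_one.comp_of_eq (continuous_leftMulMatrix e).continuousAt hL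
  exact continuous_tensorMap.continuousAt.comp
    (f := fun T => ((rightMulMatrix T e)⁻¹, (leftMulMatrix T e)⁻¹, 1, T))
    (hRinv.prodMk (hLinv.prodMk (continuousAt_const.prodMk continuousAt_id)))

lemma mem_closure_bilOrbit_of_mulMatrix_eq_one {φ : Fin n → Fin n → Fin n → ℂ} {e : Fin n → ℂ}
    (hL : leftMulMatrix φ e = 1) (hR : rightMulMatrix φ e = 1)
    (h : φ ∈ closure {S | rankLE S n}) : φ ∈ closure (BilOrbit (diagMul n)) := by
  let U := {T | IsUnit (rightMulMatrix T e).det ∧ IsUnit (leftMulMatrix T e).det}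
  have hU : IsOpen U :=
    (Units.isOpen.preimage (continuous_rightMulMatrix e).matrix_det).inter
      (Units.isOpen.preimage (continuous_leftMulMatrix e).matrix_det)
  have hφU : φ ∈ U := by simp only [U, Set.mem_ofPred_eq, hL, hR, det_one, isUnit_one, and_self]
  have hmem := (continuousAt_tensorMap_inv_mulMatrix hL hR).continuousWithinAt.mem_closure_image
    (hU.inter_closure ⟨hφU, h⟩)
  rw [hL, hR, inv_one, tensorMap_one] at hmem
  refine closure_mono ?_ hmem
  rintro _ ⟨T, ⟨hTU, hT⟩, rfl⟩
  exact tensorMap_inv_mulMatrix_mem_bilOrbit hT hTU.1 hTU.2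

theorem stmt1_general {n : ℕ} (φ : Fin n → Fin n → Fin n → ℂ)
    (hφ_unital : IsUnitalBil φ) :
    bRank φ ≤ n ↔ φ ∈ closure (BilOrbit (diagMul n)) := by
  obtain ⟨e, he⟩ := hφ_unital
  rw [bRank_le_iff]
  exact ⟨mem_closure_bilOrbit_of_mulMatrix_eq_one (leftMulMatrix_eq_one fun y => (he y).1)
    (rightMulMatrix_eq_one fun x => (he x).2), fun h => closure_mono bilOrbit_subset_rankLE h⟩

/-- a unital bilinear map on `ℂⁿ` has border rank at most `n` iff
it is smoothable, i.e. lies in the closure of the `GL(ℂⁿ)`-orbit of the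
coordinatewise multiplication of `ℂⁿ`. -/
theorem stmt1 {n : ℕ} (hn : 1 ≤ n) (φ : Fin n → Fin n → Fin n → ℂ)
    (hφ_unital : IsUnitalBil φ) :
    bRank φ ≤ n ↔ φ ∈ closure (BilOrbit (diagMul n)) :=
  stmt1_general φ hφ_unital
end

section
/- Let T ∈ V₁ ⊗ V₂ ⊗ V₃ be a binding tensor over ℂ with dim V₁ = dim V₂ = dim V₃ = n. Then T is equivalent to the structure tensor of a unital bilinear map, i.e., there exists a unital bilinear map φ : V₃ × V₃ → V₃ whose structure tensor in V₃* ⊗ V₃* ⊗ V₃ is equivalent to T. -/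
open scoped BigOperators

/-- A 2-tensor (matrix) is a sum of `r` decomposable tensors. -/
def mrankLE {p m : ℕ} (M : Fin p → Fin m → ℂ) (r : ℕ) : Prop :=
  ∃ v : Fin r → Fin p → ℂ, ∃ w : Fin r → Fin m → ℂ,
    M = fun j k => ∑ s, v s j * w s k

/-- The rank of a 2-tensor: the least `r` such that it is a sum of `r`
decomposable tensors. -/
noncomputable def mrank {p m : ℕ} (M : Fin p → Fin m → ℂ) : ℕ :=
  sInf {r | mrankLE M r}

/-- `T'` is a restriction of `T`: `T' = (F₁ ⊗ F₂ ⊗ F₃) T` for linear maps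
`Fᵢ`, in coordinates. -/
def Restriction {n₁ n₂ n₃ m₁ m₂ m₃ : ℕ}
    (T' : Fin m₁ → Fin m₂ → Fin m₃ → ℂ) (T : Fin n₁ → Fin n₂ → Fin n₃ → ℂ) : Prop :=
  ∃ F₁ : Matrix (Fin m₁) (Fin n₁) ℂ, ∃ F₂ : Matrix (Fin m₂) (Fin n₂) ℂ,
    ∃ F₃ : Matrix (Fin m₃) (Fin n₃) ℂ,
      T' = fun i j k => ∑ a, ∑ b, ∑ c, F₁ i a * F₂ j b * F₃ k c * T a b c

/-- Two tensors are equivalent if each is a restriction of the other. -/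
def EquivTensor {n₁ n₂ n₃ m₁ m₂ m₃ : ℕ}
    (T' : Fin m₁ → Fin m₂ → Fin m₃ → ℂ) (T : Fin n₁ → Fin n₂ → Fin n₃ → ℂ) : Prop :=
  Restriction T' T ∧ Restriction T T'

/-- A tensor of format `n × n × n` is binding if some contraction of its first
factor and some contraction of its second factor both have rank `n`. -/
def Binding {n : ℕ} (T : Fin n → Fin n → Fin n → ℂ) : Prop :=
  (∃ α₁ : Fin n → ℂ, mrank (fun j k => ∑ i, α₁ i * T i j k) = n) ∧
  (∃ α₂ : Fin n → ℂ, mrank (fun i k => ∑ j, α₂ j * T i j k) = n)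

open Matrix

lemma key {n : ℕ} (M : Fin n → Fin n → ℂ) (h : mrank M = n) :
    ∃ N : Matrix (Fin n) (Fin n) ℂ, Matrix.of M * N = 1 ∧ N * Matrix.of M = 1 := by
  have hdet : IsUnit (Matrix.of M).det := by
    rw [isUnit_iff_ne_zero]
    intro hd
    obtain ⟨v, hv, hvM⟩ := Matrix.exists_vecMul_eq_zero_iff.mpr hd
    obtain ⟨j₀, hj₀⟩ : ∃ j₀, v j₀ ≠ 0 := by
      by_contra hc
      push_neg at hc
      exact hv (funext hc)
    rcases n with _ | m
    · exact j₀.elim0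
    -- show mrankLE M m
    have hle : mrankLE M m := by
      refine ⟨fun s j => if j = j₀ then -(v (j₀.succAbove s)) / v j₀
        else if j₀.succAbove s = j then 1 else 0,
        fun s => M (j₀.succAbove s), ?_⟩
      funext j k
      have hrow : ∀ k, v j₀ * M j₀ k + ∑ s, v (j₀.succAbove s) * M (j₀.succAbove s) k = 0 := by
        intro k
        have := congrFun hvM k
        simpa [Matrix.vecMul, dotProduct, Fin.sum_univ_succAbove
          (fun j => v j * M j k) j₀] using this
      by_cases hj : j = j₀
      · rw [hj]
        simp only [if_true, div_mul_eq_mul_div, neg_mul]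
        rw [← Finset.sum_div, Finset.sum_neg_distrib]
        have h2 : ∑ s, v (j₀.succAbove s) * M (j₀.succAbove s) k = -(v j₀ * M j₀ k) := by
          linear_combination hrow k
        rw [h2, neg_neg, mul_div_cancel_left₀ _ hj₀]
      · simp only [if_neg hj]
        obtain ⟨s₀, hs₀⟩ := Fin.exists_succAbove_eq hj
        rw [Finset.sum_eq_single s₀]
        · rw [if_pos hs₀, hs₀, one_mul]
        · intro s _ hs
          rw [if_neg, zero_mul]
          intro hcc
          exact hs (j₀.succAbove_right_injective (hs₀ ▸ hcc))
        · intro hcc; exact absurd (Finset.mem_univ s₀) hcc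
    have : mrank M ≤ m := Nat.sInf_le hle
    omega
  exact ⟨(Matrix.of M)⁻¹, Matrix.mul_nonsing_inv _ hdet, Matrix.nonsing_inv_mul _ hdet⟩

/-- a binding tensor is equivalent to the structure tensor of a
unital bilinear map. -/
theorem stmt4 {n : ℕ} (T : Fin n → Fin n → Fin n → ℂ) (hT : Binding T) :
    ∃ φ : Fin n → Fin n → Fin n → ℂ, IsUnitalBil φ ∧ EquivTensor φ T := by
  obtain ⟨⟨α₁, hA⟩, ⟨α₂, hB⟩⟩ := hT
  set A : Matrix (Fin n) (Fin n) ℂ := Matrix.of fun j k => ∑ i, α₁ i * T i j k with hAdef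
  set B : Matrix (Fin n) (Fin n) ℂ := Matrix.of fun i k => ∑ j, α₂ j * T i j k with hBdef
  obtain ⟨A', hAA', hA'A⟩ := key _ hA
  obtain ⟨B', hBB', hB'B⟩ := key _ hB
  set S : Fin n → Matrix (Fin n) (Fin n) ℂ := fun k => Matrix.of fun a b => T a b k with hSdef
  set Φ : Fin n → Matrix (Fin n) (Fin n) ℂ := fun k => B' * S k * (A')ᵀ with hΦdef
  set φ : Fin n → Fin n → Fin n → ℂ := fun i j k => Φ k i j with hφdef
  set e : Fin n → ℂ := fun k => ∑ p, ∑ q, α₁ p * (α₂ q * T p q k) with hedef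
  have he₁ : e = α₁ ᵥ* B := by
    funext k
    simp only [hedef, Matrix.vecMul, dotProduct, hBdef, Matrix.of_apply,
      Finset.mul_sum]
  have he₂ : e = α₂ ᵥ* A := by
    funext k
    simp only [hedef, Matrix.vecMul, dotProduct, hAdef, Matrix.of_apply,
      Finset.mul_sum]
    rw [Finset.sum_comm]
    exact Finset.sum_congr rfl fun p _ => Finset.sum_congr rfl fun q _ => by ring
  have hBe : e ᵥ* B' = α₁ := by
    rw [he₁, Matrix.vecMul_vecMul, hBB', Matrix.vecMul_one]
  have hAe : e ᵥ* A' = α₂ := by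
    rw [he₂, Matrix.vecMul_vecMul, hAA', Matrix.vecMul_one]
  have hmul : ∀ (x y : Fin n → ℂ) k, mulOf φ x y k = x ⬝ᵥ (Φ k *ᵥ y) := by
    intro x y k
    simp only [mulOf, hφdef, dotProduct, Matrix.mulVec, Finset.mul_sum]
    exact Finset.sum_congr rfl fun i _ => Finset.sum_congr rfl fun j _ => by ring
  have hα₁S : ∀ k, α₁ ᵥ* S k = fun b => A b k := by
    intro k
    funext b
    simp only [Matrix.vecMul, dotProduct, hSdef, hAdef, Matrix.of_apply]
  have hSα₂ : ∀ k, S k *ᵥ α₂ = fun a => B a k := by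
    intro k
    funext a
    simp only [Matrix.mulVec, dotProduct, hSdef, hBdef, Matrix.of_apply]
    exact Finset.sum_congr rfl fun q _ => by ring
  refine ⟨φ, ⟨e, fun x => ⟨?_, ?_⟩⟩, ?_, ?_⟩
  · -- left unit
    funext k
    rw [hmul, Matrix.dotProduct_mulVec, hΦdef]
    rw [← Matrix.vecMul_vecMul, ← Matrix.vecMul_vecMul, hBe, hα₁S,
      Matrix.vecMul_transpose]
    have : A' *ᵥ (fun b => A b k) = fun j => (1 : Matrix (Fin n) (Fin n) ℂ) j k := by
      funext j
      rw [show (1 : Matrix (Fin n) (Fin n) ℂ) = A' * A from hA'A.symm, Matrix.mul_apply]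
      simp only [Matrix.mulVec, dotProduct]
    rw [this]
    simp [dotProduct, Matrix.one_apply]
  · -- right unit
    funext k
    rw [hmul, hΦdef]
    rw [← Matrix.mulVec_mulVec, ← Matrix.mulVec_mulVec, Matrix.mulVec_transpose, hAe, hSα₂]
    have : B' *ᵥ (fun a => B a k) = fun i => (1 : Matrix (Fin n) (Fin n) ℂ) i k := by
      funext i
      rw [show (1 : Matrix (Fin n) (Fin n) ℂ) = B' * B from hB'B.symm, Matrix.mul_apply]
      simp only [Matrix.mulVec, dotProduct]
    rw [this]
    simp [dotProduct, Matrix.one_apply]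
  · -- Restriction φ T
    refine ⟨B', A', 1, ?_⟩
    funext i j k
    have hc : ∀ a b : Fin n, ∑ c, B' i a * A' j b * (1 : Matrix (Fin n) (Fin n) ℂ) k c * T a b c
        = B' i a * A' j b * T a b k := by
      intro a b
      simp [Matrix.one_apply, mul_ite, ite_mul]
    rw [show (∑ a, ∑ b, ∑ c, B' i a * A' j b * (1 : Matrix (Fin n) (Fin n) ℂ) k c * T a b c)
      = ∑ a, ∑ b, B' i a * A' j b * T a b k from
        Finset.sum_congr rfl fun a _ => Finset.sum_congr rfl fun b _ => hc a b]
    show Φ k i j = _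
    rw [hΦdef]
    simp only [Matrix.mul_apply, Matrix.transpose_apply, hSdef, Matrix.of_apply,
      Finset.sum_mul]
    rw [Finset.sum_comm]
    exact Finset.sum_congr rfl fun a _ => Finset.sum_congr rfl fun b _ => by ring
  · -- Restriction T φ
    refine ⟨B, A, 1, ?_⟩
    have hMat : ∀ z, B * Φ z * Aᵀ = S z := by
      intro z
      have h1 : (A')ᵀ * Aᵀ = 1 := by
        rw [← Matrix.transpose_mul, hAA', Matrix.transpose_one]
      rw [hΦdef]
      calc B * (B' * S z * (A')ᵀ) * Aᵀ = (B * B') * (S z * ((A')ᵀ * Aᵀ)) := by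
            simp only [Matrix.mul_assoc]
        _ = S z := by rw [h1, Matrix.mul_one, hBB', Matrix.one_mul]
    funext x y z
    have hc : ∀ i j : Fin n, ∑ k, B x i * A y j * (1 : Matrix (Fin n) (Fin n) ℂ) z k * φ i j k
        = B x i * A y j * Φ z i j := by
      intro i j
      simp [Matrix.one_apply, mul_ite, ite_mul, hφdef]
    have hsum : (∑ i, ∑ j, ∑ k, B x i * A y j * (1 : Matrix (Fin n) (Fin n) ℂ) z k * φ i j k)
        = ∑ i, ∑ j, B x i * A y j * Φ z i j :=
      Finset.sum_congr rfl fun i _ => Finset.sum_congr rfl fun j _ => hc i j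
    rw [hsum]
    have := congrFun (congrFun (hMat z) x) y
    rw [show T x y z = S z x y from rfl, ← this]
    simp only [Matrix.mul_apply, Matrix.transpose_apply, Finset.sum_mul]
    rw [Finset.sum_comm]
    exact Finset.sum_congr rfl fun i _ => Finset.sum_congr rfl fun j _ => by ring
end

section
/- Fix q ≥ 1. The algebra A_CW = ℂ[x₁, …, x_q]/⟨xᵢxⱼ (i ≠ j), xᵢ² − xⱼ², xᵢ³⟩ has (1, x₁, …, x_q, x₁²) as a ℂ-basis, and the bilinear map on ℂ^{q+2} obtained by transporting the multiplication of A_CW along this basis is smoothable: it lies in the closure of the GL(ℂ^{q+2})-orbit {(x, y) ↦ g(μ(g⁻¹x, g⁻¹y)) : g ∈ GL(ℂ^{q+2})} of the coordinatewise multiplication μ(x, y) = (x₁y₁, …, x_{q+2}y_{q+2}) of ℂ^{q+2}. -/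
open scoped BigOperators

open MvPolynomial in
/-- The ideal `⟨xᵢxⱼ (i ≠ j), xᵢ² − xⱼ², xᵢ³⟩` of `ℂ[x₁, …, x_q]`. -/
noncomputable def cwIdeal (q : ℕ) : Ideal (MvPolynomial (Fin q) ℂ) :=
  Ideal.span ({p | ∃ i j, i ≠ j ∧ p = X i * X j} ∪
    {p | ∃ i j, p = X i ^ 2 - X j ^ 2} ∪
    {p | ∃ i, p = X i ^ 3})

/-- The Coppersmith–Winograd algebra `A_CW = ℂ[x₁, …, x_q] / cwIdeal q`. -/
abbrev ACW (q : ℕ) : Type := MvPolynomial (Fin q) ℂ ⧸ cwIdeal q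

/-- The index of the basis vector corresponding to `xᵢ` inside `Fin (q + 2)`. -/
def emb (q : ℕ) (i : Fin q) : Fin (q + 2) := ⟨i.1 + 1, by omega⟩

open MvPolynomial Filter Topology

/-!
The algebra `A_CW` is the `ε = 0` member of a family of multiplication tables `cwTable q ε`
on a frame `(1, x₁, …, x_q, w)`, with structure constants polynomial in `ε`. For `ε ≠ 0` the
table is realised in `ℂ^{q+2}` with the coordinatewise product by the basis
`xₐ = ε eₐ - ε² e₀`, `w = ε³ e₀`, so it lies in the orbit of that product; letting `ε → 0`
puts the structure tensor of `A_CW` in the closure of the orbit.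

The family `1, xᵢ, x_j²` spans `A_CW` because the table makes its span a subalgebra containing
the generators, and it is linearly independent because `A_CW` maps to the unitization of
`ℂ^q × ℂ` with product `(v, c) (v', c') = (0, v ⬝ᵥ v')`, where the images are visibly
independent.
-/

section StructConst

variable {ι R A : Type*} [CommSemiring R] [Semiring A] [Algebra R A]

noncomputable def structConst [Fintype ι] (b : Module.Basis ι R A) (i j k : ι) : R :=
  b.repr (b i * b j) k

theorem structConst_eq_of_mul_eq [Fintype ι] {b : Module.Basis ι R A} {T : ι → ι → ι → R}
    (h : ∀ i j, b i * b j = Fintype.linearCombination R b (T i j)) : structConst b = T := by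
  funext i j k
  rw [structConst, h, Fintype.linearCombination_apply, b.repr_sum_self]

theorem span_range_eq_top_of_mul_mem {u : ι → A} (h_one : 1 ∈ Submodule.span R (Set.range u))
    (h_mul : ∀ i j, u i * u j ∈ Submodule.span R (Set.range u))
    (h_adjoin : Algebra.adjoin R (Set.range u) = ⊤) :
    Submodule.span R (Set.range u) = ⊤ := by
  set p := Submodule.span R (Set.range u)
  have hmul : p * p ≤ p := by
    rw [Submodule.span_mul_span, Submodule.span_le]
    rintro _ ⟨_, ⟨i, rfl⟩, _, ⟨j, rfl⟩, rfl⟩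
    exact h_mul i j
  let S := p.toSubalgebra h_one fun x y hx hy => hmul (Submodule.mul_mem_mul hx hy)
  have hS : S = ⊤ := top_le_iff.mp (h_adjoin ▸ Algebra.adjoin_le Submodule.subset_span)
  simpa [S] using congrArg Subalgebra.toSubmodule hS

end StructConst

theorem sum_mul_diagMul {n : ℕ} (P P' Q : Matrix (Fin n) (Fin n) ℂ) (i j k : Fin n) :
    ∑ a, ∑ b, ∑ c, P a i * P' b j * Q k c * diagMul n a b c = ∑ a, P a i * P' a j * Q k a := by
  simp [diagMul, ite_and]

theorem structConst_mem_bilOrbit {n : ℕ} (v : Module.Basis (Fin n) ℂ (Fin n → ℂ)) :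
    structConst v ∈ BilOrbit (diagMul n) := by
  let e := Pi.basisFun ℂ (Fin n)
  refine ⟨⟨v.toMatrix e, e.toMatrix v, v.toMatrix_mul_toMatrix_flip e,
    e.toMatrix_mul_toMatrix_flip v⟩, ?_⟩
  funext i j k
  rw [Units.inv_mk, Units.val_mk, Units.val_mk, sum_mul_diagMul, structConst,
    ← e.toMatrix_mulVec_repr v]
  simp [e, Matrix.mulVec, dotProduct, Module.Basis.toMatrix_apply, mul_comm]

section Index

variable {q : ℕ}

@[simp] theorem emb_ne_zero (i : Fin q) : emb q i ≠ 0 := by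
  simp [emb, Fin.ext_iff]

@[simp] theorem emb_ne_last (i : Fin q) : emb q i ≠ Fin.last (q + 1) := by
  simp [emb, Fin.ext_iff, i.isLt.ne]

@[simp] theorem last_ne_emb (i : Fin q) : Fin.last (q + 1) ≠ emb q i :=
  (emb_ne_last i).symm

@[simp] theorem emb_inj {i j : Fin q} : emb q i = emb q j ↔ i = j := by
  simp [emb, Fin.ext_iff]

theorem emb_eq_succ_castSucc (i : Fin q) : emb q i = i.castSucc.succ := rfl

theorem eq_zero_or_eq_emb_or_eq_last (k : Fin (q + 2)) :
    k = 0 ∨ (∃ i, k = emb q i) ∨ k = Fin.last (q + 1) := by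
  induction k using Fin.cases with
  | zero => exact Or.inl rfl
  | succ k =>
    induction k using Fin.lastCases with
    | last => exact Or.inr (Or.inr (Fin.succ_last q))
    | cast i => exact Or.inr (Or.inl ⟨i, rfl⟩)

theorem sum_fin_eq_zero_add_sum_emb_add_last {M : Type*} [AddCommMonoid M]
    (f : Fin (q + 2) → M) :
    ∑ k, f k = f 0 + ∑ i, f (emb q i) + f (Fin.last (q + 1)) := by
  rw [Fin.sum_univ_succ, Fin.sum_univ_castSucc, ← add_assoc, Fin.succ_last]
  rfl

end Index

section CWFamily

variable {q : ℕ} {A : Type*}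

def cwFamily (one : A) (x : Fin q → A) (w : A) : Fin (q + 2) → A :=
  Fin.cases one (Fin.lastCases w x)

variable (one : A) (x : Fin q → A) (w : A)

@[simp] theorem cwFamily_zero : cwFamily one x w 0 = one := rfl

@[simp] theorem cwFamily_emb (i : Fin q) : cwFamily one x w (emb q i) = x i := by
  simp [cwFamily, emb_eq_succ_castSucc]

@[simp] theorem cwFamily_last : cwFamily one x w (Fin.last (q + 1)) = w := by
  simp [cwFamily, ← Fin.succ_last]

theorem comp_cwFamily {B : Type*} (f : A → B) :
    f ∘ cwFamily one x w = cwFamily (f one) (f ∘ x) (f w) := by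
  funext k
  rcases eq_zero_or_eq_emb_or_eq_last k with rfl | ⟨i, rfl⟩ | rfl <;> simp

end CWFamily

section CWFrame

variable {q : ℕ} {R A : Type*} [CommRing R] [CommRing A] [Algebra R A]

def cwTable (q : ℕ) (ε : R) (i j : Fin (q + 2)) : Fin (q + 2) → R :=
  if i = 0 then Pi.single j 1
  else if j = 0 then Pi.single i 1
  else if i = Fin.last (q + 1) ∨ j = Fin.last (q + 1) then
    Pi.single (Fin.last (q + 1)) (if i = j then ε ^ 3 else -ε ^ 2)
  else if i = j then ε • Pi.single i 1 + Pi.single (Fin.last (q + 1)) (1 + ε)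
  else Pi.single (Fin.last (q + 1)) ε

structure IsCWFrame (ε : R) (x : Fin q → A) (w : A) : Prop where
  mul_self : ∀ a, x a * x a = ε • x a + (1 + ε) • w
  mul_of_ne : ∀ a b, a ≠ b → x a * x b = ε • w
  mul_w : ∀ a, x a * w = (-ε ^ 2) • w
  w_mul_w : w * w = ε ^ 3 • w

variable {ε : R} {x : Fin q → A} {w : A}

theorem IsCWFrame.mul_eq (h : IsCWFrame ε x w) (i j : Fin (q + 2)) :
    cwFamily 1 x w i * cwFamily 1 x w j =
      Fintype.linearCombination R (cwFamily 1 x w) (cwTable q ε i j) := by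
  rcases eq_zero_or_eq_emb_or_eq_last i with rfl | ⟨a, rfl⟩ | rfl <;>
    rcases eq_zero_or_eq_emb_or_eq_last j with rfl | ⟨b, rfl⟩ | rfl <;>
    simp [cwTable, Fintype.linearCombination_apply_single, h.mul_w, h.w_mul_w, mul_comm w]
  by_cases hab : a = b
  · simp [hab, h.mul_self]
  · simp [hab, h.mul_of_ne a b hab]

theorem IsCWFrame.structConst_eq (h : IsCWFrame ε x w) {b : Module.Basis (Fin (q + 2)) R A}
    (hb : ⇑b = cwFamily 1 x w) : structConst b = cwTable q ε :=
  structConst_eq_of_mul_eq fun i j => by rw [hb]; exact h.mul_eq i j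

theorem IsCWFrame.span_eq_top (h : IsCWFrame ε x w)
    (hx : Algebra.adjoin R (Set.range x) = ⊤) :
    Submodule.span R (Set.range (cwFamily 1 x w)) = ⊤ := by
  refine span_range_eq_top_of_mul_mem (Submodule.subset_span ⟨0, rfl⟩) (fun i j => ?_)
    (eq_top_mono (Algebra.adjoin_mono ?_) hx)
  · rw [h.mul_eq, ← Fintype.range_linearCombination]
    exact LinearMap.mem_range_self _ _
  · rintro _ ⟨a, rfl⟩
    exact ⟨emb q a, cwFamily_emb _ _ _ a⟩

end CWFrame

theorem continuous_cwTable (q : ℕ) : Continuous (cwTable q : ℂ → _) := by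
  refine continuous_pi fun i => continuous_pi fun j => continuous_pi fun k => ?_
  unfold cwTable
  split_ifs <;> simp only [Pi.single_apply, Pi.add_apply, Pi.smul_apply] <;> split_ifs <;> fun_prop

section Split

variable {q : ℕ}

def splitX {R : Type*} [CommRing R] (ε : R) (a : Fin q) : Fin (q + 2) → R :=
  ε • Pi.single (emb q a) 1 - ε ^ 2 • Pi.single 0 1

def splitW {R : Type*} [CommRing R] (q : ℕ) (ε : R) : Fin (q + 2) → R :=
  ε ^ 3 • Pi.single 0 1

theorem isCWFrame_split {R : Type*} [CommRing R] (ε : R) :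
    IsCWFrame ε (splitX (q := q) ε) (splitW q ε) := by
  refine ⟨fun a => ?_, fun a b hab => ?_, fun a => ?_, ?_⟩ <;> funext k <;>
    rcases eq_zero_or_eq_emb_or_eq_last k with rfl | ⟨c, rfl⟩ | rfl <;>
    simp [splitX, splitW, Pi.single_apply] <;> first | ring1 | (intros; simp_all)

theorem linearIndependent_split {K : Type*} [Field K] {ε : K} (hε : ε ≠ 0) :
    LinearIndependent K (cwFamily 1 (splitX (q := q) ε) (splitW q ε)) := by
  rw [Fintype.linearIndependent_iff]
  intro g hg
  have h := congrFun hg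
  have h0 := h 0
  have hlast := h (Fin.last (q + 1))
  have hemb := fun a => h (emb q a)
  simp [sum_fin_eq_zero_add_sum_emb_add_last, Finset.sum_apply, splitX, splitW,
    Pi.single_apply] at h0 hlast hemb
  have hx : ∀ a, g (emb q a) = 0 := fun a => by simpa [hlast, hε] using hemb a
  intro k
  rcases eq_zero_or_eq_emb_or_eq_last k with rfl | ⟨a, rfl⟩ | rfl
  · exact hlast
  · exact hx a
  · simpa [hlast, hx, hε] using h0

end Split

theorem cwTable_zero_mem_closure_bilOrbit (q : ℕ) :
    cwTable q (0 : ℂ) ∈ closure (BilOrbit (diagMul (q + 2))) := by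
  have hT : Tendsto (cwTable q) (𝓝[≠] (0 : ℂ)) (𝓝 (cwTable q 0)) :=
    (continuous_cwTable q).continuousAt.mono_left nhdsWithin_le_nhds
  refine mem_closure_of_tendsto hT (eventually_nhdsWithin_of_forall fun ε hε => ?_)
  rw [← (isCWFrame_split ε).structConst_eq (coe_basisOfLinearIndependentOfCardEqFinrank
    (linearIndependent_split hε) (by simp))]
  exact structConst_mem_bilOrbit _

def DotNilAlg (ι R : Type*) : Type _ := (ι → R) × R

namespace DotNilAlg

variable {ι R : Type*} [Fintype ι] [CommRing R]

instance : AddCommGroup (DotNilAlg ι R) := inferInstanceAs (AddCommGroup ((ι → R) × R))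

instance : Module R (DotNilAlg ι R) := inferInstanceAs (Module R ((ι → R) × R))

instance : Mul (DotNilAlg ι R) := ⟨fun x y => (0, x.1 ⬝ᵥ y.1)⟩

theorem mul_def (x y : DotNilAlg ι R) : x * y = ((0 : ι → R), x.1 ⬝ᵥ y.1) := rfl

instance : NonUnitalCommRing (DotNilAlg ι R) where
  left_distrib x y z := Prod.ext (add_zero 0).symm (dotProduct_add x.1 y.1 z.1)
  right_distrib x y z := Prod.ext (add_zero 0).symm (add_dotProduct x.1 y.1 z.1)
  zero_mul x := Prod.ext rfl (zero_dotProduct x.1)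
  mul_zero x := Prod.ext rfl (dotProduct_zero x.1)
  mul_assoc x _ z := Prod.ext rfl ((zero_dotProduct z.1).trans (dotProduct_zero x.1).symm)
  mul_comm x y := Prod.ext rfl (dotProduct_comm x.1 y.1)

instance : IsScalarTower R (DotNilAlg ι R) (DotNilAlg ι R) where
  smul_assoc r x y := Prod.ext (smul_zero r).symm (smul_dotProduct r x.1 y.1)

instance : SMulCommClass R (DotNilAlg ι R) (DotNilAlg ι R) where
  smul_comm r x y := Prod.ext (smul_zero r) (dotProduct_smul r x.1 y.1).symm

variable {q : ℕ}

def vec (a : Fin q) : DotNilAlg (Fin q) R := (Pi.single a 1, 0)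

def socle : DotNilAlg (Fin q) R := (0, 1)

theorem vec_mul_vec (a b : Fin q) :
    (vec a * vec b : DotNilAlg (Fin q) R) = if a = b then socle else 0 := by
  rw [mul_def]
  split_ifs with h
  · subst h; exact Prod.ext rfl (by simp [vec, socle])
  · exact Prod.ext rfl (by simp [vec, h]; rfl)

theorem vec_mul_socle (a : Fin q) : (vec a * socle : DotNilAlg (Fin q) R) = 0 :=
  Prod.ext rfl (dotProduct_zero (vec a).1)

theorem socle_mul_socle : (socle * socle : DotNilAlg (Fin q) R) = 0 :=
  Prod.ext rfl (dotProduct_zero (0 : Fin q → R))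

theorem isCWFrame :
    IsCWFrame (0 : R) (fun a => Unitization.inr (R := R) (vec a : DotNilAlg (Fin q) R))
      (Unitization.inr (socle : DotNilAlg (Fin q) R)) := by
  refine ⟨fun a => ?_, fun a b hab => ?_, fun a => ?_, ?_⟩ <;>
    simp [← Unitization.inr_mul, vec_mul_vec, vec_mul_socle, socle_mul_socle, *]

theorem linearIndependent :
    LinearIndependent R
      (cwFamily 1 (fun a => Unitization.inr (R := R) (vec a : DotNilAlg (Fin q) R))
        (Unitization.inr (socle : DotNilAlg (Fin q) R))) := by
  rw [Fintype.linearIndependent_iff]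
  intro g hg
  have hinr : ∑ a, g (emb q a) • (Unitization.inr (vec a : DotNilAlg (Fin q) R) : Unitization R _)
      = Unitization.inr (∑ a, g (emb q a) • vec a) := by
    simp only [← Unitization.inr_smul]
    exact (map_sum (Unitization.inrHom R R (DotNilAlg (Fin q) R)) _ _).symm
  have h1 := congrArg (·.fst) hg
  have h2 := congrArg (·.snd) hg
  simp [sum_fin_eq_zero_add_sum_emb_add_last, hinr] at h1 h2
  replace h2 : ∑ a, g (emb q a) • ((Pi.single a 1, 0) : (Fin q → R) × R)
      + g (Fin.last (q + 1)) • ((0, 1) : (Fin q → R) × R) = 0 := h2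
  have hx : ∀ a, g (emb q a) = 0 := fun a => by
    simpa [Prod.fst_sum, Finset.sum_apply, Pi.single_apply] using congrFun (congrArg Prod.fst h2) a
  have hw : g (Fin.last (q + 1)) = 0 := by simpa [Prod.snd_sum] using congrArg Prod.snd h2
  intro k
  rcases eq_zero_or_eq_emb_or_eq_last k with rfl | ⟨a, rfl⟩ | rfl
  exacts [h1, hx a, hw]

end DotNilAlg

section ACW

variable {q : ℕ}

theorem X_mul_X_mem_cwIdeal {i j : Fin q} (h : i ≠ j) : X i * X j ∈ cwIdeal q :=
  Ideal.subset_span (Or.inl (Or.inl ⟨i, j, h, rfl⟩))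

theorem X_sq_sub_X_sq_mem_cwIdeal (i j : Fin q) : X i ^ 2 - X j ^ 2 ∈ cwIdeal q :=
  Ideal.subset_span (Or.inl (Or.inr ⟨i, j, rfl⟩))

theorem X_pow_three_mem_cwIdeal (i : Fin q) : X i ^ 3 ∈ cwIdeal q :=
  Ideal.subset_span (Or.inr ⟨i, rfl⟩)

theorem X_mul_X_sq_mem_cwIdeal (i j : Fin q) : X i * X j ^ 2 ∈ cwIdeal q := by
  by_cases h : i = j
  · subst h
    simpa [pow_succ'] using X_pow_three_mem_cwIdeal (q := q) i
  · simpa [sq, mul_assoc] using Ideal.mul_mem_right (X j) _ (X_mul_X_mem_cwIdeal h)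

theorem isCWFrame_acw (j : Fin q) :
    IsCWFrame (0 : ℂ) (fun i => Ideal.Quotient.mk (cwIdeal q) (X i))
      (Ideal.Quotient.mk (cwIdeal q) (X j ^ 2)) := by
  refine ⟨fun a => ?_, fun a b hab => ?_, fun a => ?_, ?_⟩ <;>
    simp only [← map_mul, zero_smul, zero_add, add_zero, one_smul, ne_eq, OfNat.ofNat_ne_zero,
      not_false_eq_true, zero_pow, neg_zero]
  · exact Ideal.Quotient.eq.mpr (by simpa [sq] using X_sq_sub_X_sq_mem_cwIdeal a j)
  · exact Ideal.Quotient.eq_zero_iff_mem.mpr (X_mul_X_mem_cwIdeal hab)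
  · exact Ideal.Quotient.eq_zero_iff_mem.mpr (X_mul_X_sq_mem_cwIdeal a j)
  · exact Ideal.Quotient.eq_zero_iff_mem.mpr (by
      simpa [sq, mul_assoc] using Ideal.mul_mem_left _ (X j) (X_mul_X_sq_mem_cwIdeal j j))

theorem IsCWFrame.cwIdeal_le_ker {A : Type*} [CommRing A] [Algebra ℂ A] {x : Fin q → A} {w : A}
    (h : IsCWFrame (0 : ℂ) x w) : cwIdeal q ≤ RingHom.ker (aeval x) := by
  have hsq : ∀ a, x a ^ 2 = w := fun a => by simpa [sq] using h.mul_self a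
  rw [cwIdeal, Ideal.span_le]
  rintro p ((⟨i, j, hij, rfl⟩ | ⟨i, j, rfl⟩) | ⟨i, rfl⟩) <;> simp only [SetLike.mem_coe,
    RingHom.mem_ker, map_mul, map_sub, map_pow, aeval_X]
  · simpa using h.mul_of_ne i j hij
  · rw [hsq, hsq, sub_self]
  · simpa [pow_succ', hsq] using h.mul_w i

theorem adjoin_range_mk_X {σ R : Type*} [CommRing R] (I : Ideal (MvPolynomial σ R)) :
    Algebra.adjoin R (Set.range fun i => Ideal.Quotient.mk I (X i)) = ⊤ := by
  rw [Algebra.adjoin_range_eq_range_aeval, AlgHom.range_eq_top]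
  convert Ideal.Quotient.mkₐ_surjective R I
  exact MvPolynomial.algHom_ext fun i => by simp

noncomputable def IsCWFrame.lift {A : Type*} [CommRing A] [Algebra ℂ A] {x : Fin q → A} {w : A}
    (h : IsCWFrame (0 : ℂ) x w) : ACW q →ₐ[ℂ] A :=
  Ideal.Quotient.liftₐ (cwIdeal q) (aeval x) fun _ hp => h.cwIdeal_le_ker hp

theorem IsCWFrame.lift_mk_X {A : Type*} [CommRing A] [Algebra ℂ A] {x : Fin q → A} {w : A}
    (h : IsCWFrame (0 : ℂ) x w) (i : Fin q) :
    h.lift (Ideal.Quotient.mk (cwIdeal q) (X i)) = x i :=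
  aeval_X x i

theorem linearIndependent_acw (j : Fin q) :
    LinearIndependent ℂ (cwFamily 1 (fun i => Ideal.Quotient.mk (cwIdeal q) (X i))
      (Ideal.Quotient.mk (cwIdeal q) (X j ^ 2))) := by
  have h := DotNilAlg.isCWFrame (R := ℂ) (q := q)
  refine LinearIndependent.of_comp h.lift.toLinearMap ?_
  have hw : h.lift (Ideal.Quotient.mk (cwIdeal q) (X j ^ 2)) =
      Unitization.inr (R := ℂ) (DotNilAlg.socle : DotNilAlg (Fin q) ℂ) := by
    simpa [sq, h.lift_mk_X] using h.mul_self j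
  rw [AlgHom.coe_toLinearMap, comp_cwFamily, map_one, hw, Function.comp_def]
  simpa only [h.lift_mk_X] using DotNilAlg.linearIndependent

noncomputable def cwBasis (j : Fin q) : Module.Basis (Fin (q + 2)) ℂ (ACW q) :=
  Module.Basis.mk (linearIndependent_acw j)
    ((isCWFrame_acw j).span_eq_top (adjoin_range_mk_X _)).ge

theorem coe_cwBasis (j : Fin q) :
    ⇑(cwBasis j) = cwFamily 1 (fun i => Ideal.Quotient.mk (cwIdeal q) (X i))
      (Ideal.Quotient.mk (cwIdeal q) (X j ^ 2)) :=
  Module.Basis.coe_mk _ _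

end ACW

/-- `(1, x₁, …, x_q, x₁²)` is a `ℂ`-basis of `A_CW`, and the
bilinear map on `ℂ^{q+2}` obtained by transporting the multiplication of
`A_CW` along this basis is smoothable. -/
theorem stmt8 (q : ℕ) (hq : 1 ≤ q) :
    ∃ b : Module.Basis (Fin (q + 2)) ℂ (ACW q),
      b 0 = 1 ∧
      (∀ i : Fin q, b (emb q i) = Ideal.Quotient.mk (cwIdeal q) (MvPolynomial.X i)) ∧
      b (Fin.last (q + 1)) =
        Ideal.Quotient.mk (cwIdeal q) (MvPolynomial.X (⟨0, hq⟩ : Fin q) ^ 2) ∧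
      (fun i j k => b.repr (b i * b j) k) ∈ closure (BilOrbit (diagMul (q + 2))) := by
  have hb := coe_cwBasis (⟨0, hq⟩ : Fin q)
  refine ⟨cwBasis ⟨0, hq⟩, by simp [hb], fun i => by simp [hb], by simp [hb], ?_⟩
  change structConst (cwBasis ⟨0, hq⟩) ∈ _
  rw [(isCWFrame_acw _).structConst_eq hb]
  exact cwTable_zero_mem_closure_bilOrbit q
end

section
/- Fix q ≥ 2 and let φ_cw : ℂ^{q+1} × ℂ^{q+1} → ℂ^{q+1} be the easy Coppersmith–Winograd bilinear map. Then for every bilinear map ψ : U × V → W between finite-dimensional ℂ-vector spaces with U ≠ 0, m(φ_cw ⊗ ψ) ≥ 2 m(ψ). -/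
/-! Write `u = Σᵢ eᵢ ⊗ uᵢ`. If `u₀ ≠ 0`, the inputs `e₁ ⊗ x + e₂ ⊗ y`
produce `ψ(u₀, x)` and `ψ(u₀, y)` in the output blocks `1` and `2`, independently of each other;
if `u₀ = 0` but `u_c ≠ 0`, the inputs `e_c ⊗ x + e₀ ⊗ y` produce `ψ(u_c, x)` in block `0` and
`ψ(u_c, y)` in block `c`. Either way, projecting the image of `(φ_cw ⊗ ψ)(u, ·)` onto two blocks
covers `S × S` with `S` the image of `ψ(w, ·)` for some `w ≠ 0`, so it has dimension
at least `2 dim S ≥ 2 m(ψ)`. -/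
open scoped BigOperators

/-- Evaluation of a bilinear map given by a structure-constant array. -/
noncomputable def bApp {I J K : Type*} [Fintype I] [Fintype J]
    (ψ : I → J → K → ℂ) (u : I → ℂ) (v : J → ℂ) : K → ℂ :=
  fun k => ∑ i, ∑ j, ψ i j k * u i * v j

/-- `m(ψ)`: the minimum over nonzero `u` of the dimension of the span of
`{ψ(u, v) : v}`. -/
noncomputable def mval {I J K : Type*} [Fintype I] [Fintype J]
    (ψ : I → J → K → ℂ) : ℕ :=
  sInf {d | ∃ u : I → ℂ, u ≠ 0 ∧
    d = Module.finrank ℂ (Submodule.span ℂ (Set.range (bApp ψ u)))}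

/-- The tensor product of two bilinear maps, in coordinates. -/
noncomputable def tmulBil {I J K I' J' K' : Type*}
    (φ : I → J → K → ℂ) (ψ : I' → J' → K' → ℂ) :
    I × I' → J × J' → K × K' → ℂ :=
  fun i j k => φ i.1 j.1 k.1 * ψ i.2 j.2 k.2

/-- The easy Coppersmith–Winograd bilinear map
`φ_cw(a, b) = (Σᵢ aᵢbᵢ) e₀ + Σᵢ (a₀bᵢ + aᵢb₀) eᵢ` on `ℂ^{q+1}`,
as a structure-constant array. -/
noncomputable def cwArr (q : ℕ) : Fin (q + 1) → Fin (q + 1) → Fin (q + 1) → ℂ :=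
  fun i j k =>
    if k = 0 then (if i = j ∧ i ≠ 0 then 1 else 0)
    else (if i = 0 ∧ j = k then 1 else 0) + (if i = k ∧ j = 0 then 1 else 0)

open Module Submodule Function

theorem two_mul_finrank_le_of_prod_le_map {R W X : Type*} [DivisionRing R]
    [AddCommGroup W] [Module R W] [AddCommGroup X] [Module R X]
    (M : Submodule R W) [FiniteDimensional R M] (π : W →ₗ[R] X × X)
    (S : Submodule R X) [FiniteDimensional R S]
    (h : S.prod S ≤ M.map π) : 2 * finrank R S ≤ finrank R M := by
  let g := S.subtype.prodMap S.subtype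
  have hg : Injective g := S.injective_subtype.prodMap S.injective_subtype
  have hrange : LinearMap.range g = S.prod S := by
    rw [LinearMap.range_prodMap, range_subtype]
  calc 2 * finrank R S = finrank R (S × S) := by rw [finrank_prod]; ring
    _ = finrank R (LinearMap.range g) := (LinearMap.finrank_range_of_inj hg).symm
    _ ≤ finrank R (M.map π) := finrank_mono (hrange ▸ h)
    _ ≤ finrank R M := finrank_map_le π M

section BilinearArray

variable {I J K : Type*} [Fintype I] [Fintype J]

theorem bApp_add_right (ψ : I → J → K → ℂ) (u : I → ℂ) (x y : J → ℂ) :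
    bApp ψ u (x + y) = bApp ψ u x + bApp ψ u y := by
  funext k
  simp [bApp, mul_add, Finset.sum_add_distrib]

theorem bApp_smul_right (ψ : I → J → K → ℂ) (u : I → ℂ) (c : ℂ) (x : J → ℂ) :
    bApp ψ u (c • x) = c • bApp ψ u x := by
  funext k
  simp only [bApp, Pi.smul_apply, smul_eq_mul, Finset.mul_sum]
  exact Finset.sum_congr rfl fun i _ => Finset.sum_congr rfl fun j _ => by ring

@[simp]
theorem bApp_zero_right (ψ : I → J → K → ℂ) (u : I → ℂ) : bApp ψ u 0 = 0 := by
  funext k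
  simp [bApp]

@[simp]
theorem bApp_zero_left (ψ : I → J → K → ℂ) (v : J → ℂ) : bApp ψ 0 v = 0 := by
  funext k
  simp [bApp]

noncomputable def bAppₗ (ψ : I → J → K → ℂ) (u : I → ℂ) : (J → ℂ) →ₗ[ℂ] (K → ℂ) where
  toFun := bApp ψ u
  map_add' := bApp_add_right ψ u
  map_smul' := bApp_smul_right ψ u

theorem span_range_bApp (ψ : I → J → K → ℂ) (u : I → ℂ) :
    span ℂ (Set.range (bApp ψ u)) = LinearMap.range (bAppₗ ψ u) := by
  rw [← span_eq (LinearMap.range (bAppₗ ψ u)), LinearMap.coe_range]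
  rfl

instance (ψ : I → J → K → ℂ) (u : I → ℂ) :
    FiniteDimensional ℂ (span ℂ (Set.range (bApp ψ u))) := by
  rw [span_range_bApp]
  infer_instance

theorem two_mul_finrank_le_of_forall_exists_curry_eq {A : Type*} {I' J' : Type*}
    [Fintype I'] [Fintype J'] (T : I' → J' → A × K → ℂ) (ψ : I → J → K → ℂ)
    (u : I' → ℂ) (w : I → ℂ) (a b : A)
    (h : ∀ x y, ∃ v, curry (bApp T u v) a = bApp ψ w x ∧ curry (bApp T u v) b = bApp ψ w y) :
    2 * finrank ℂ (span ℂ (Set.range (bApp ψ w))) ≤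
      finrank ℂ (span ℂ (Set.range (bApp T u))) := by
  refine two_mul_finrank_le_of_prod_le_map _
    ((LinearMap.funLeft ℂ ℂ (a, ·)).prod (LinearMap.funLeft ℂ ℂ (b, ·))) _ ?_
  rw [span_range_bApp ψ w]
  rintro ⟨_, _⟩ ⟨⟨x, rfl⟩, ⟨y, rfl⟩⟩
  obtain ⟨v, hva, hvb⟩ := h x y
  exact ⟨bApp T u v, subset_span ⟨v, rfl⟩, Prod.ext hva hvb⟩

theorem curry_bApp_tmulBil {A B C : Type*} [Fintype A] [Fintype B]
    (φ : A → B → C → ℂ) (ψ : I → J → K → ℂ) (u : A × I → ℂ) (v : B × J → ℂ) (c : C) :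
    curry (bApp (tmulBil φ ψ) u v) c =
      ∑ a, ∑ b, φ a b c • bApp ψ (curry u a) (curry v b) := by
  funext κ
  simp only [curry, bApp, tmulBil, Fintype.sum_prod_type, Finset.sum_apply, Pi.smul_apply,
    smul_eq_mul, Finset.mul_sum]
  refine Finset.sum_congr rfl fun a _ => ?_
  rw [Finset.sum_comm]
  exact Finset.sum_congr rfl fun b _ => Finset.sum_congr rfl fun i _ =>
    Finset.sum_congr rfl fun j _ => by ring

end BilinearArray

section CoppersmithWinograd

variable {q : ℕ} {I J K : Type*} [Fintype I] [Fintype J]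

theorem curry_bApp_tmulBil_cwArr_zero (ψ : I → J → K → ℂ) (u : Fin (q + 1) × I → ℂ)
    (v : Fin (q + 1) × J → ℂ) :
    curry (bApp (tmulBil (cwArr q) ψ) u v) 0 =
      ∑ i with i ≠ 0, bApp ψ (curry u i) (curry v i) := by
  simp [curry_bApp_tmulBil, cwArr, ite_smul, ite_and, Finset.sum_ite_eq, Finset.sum_filter]

theorem curry_bApp_tmulBil_cwArr_of_ne_zero (ψ : I → J → K → ℂ) (u : Fin (q + 1) × I → ℂ)
    (v : Fin (q + 1) × J → ℂ) {k : Fin (q + 1)} (hk : k ≠ 0) :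
    curry (bApp (tmulBil (cwArr q) ψ) u v) k =
      bApp ψ (curry u 0) (curry v k) + bApp ψ (curry u k) (curry v 0) := by
  simp [curry_bApp_tmulBil, cwArr, hk, add_smul, Finset.sum_add_distrib, ite_smul, ite_and]

theorem exists_blocks_curry_bApp_tmulBil_cwArr (hq : 2 ≤ q) (ψ : I → J → K → ℂ)
    (u : Fin (q + 1) × I → ℂ) (hu : u ≠ 0) :
    ∃ (a b : Fin (q + 1)) (w : I → ℂ), w ≠ 0 ∧ ∀ x y, ∃ v,
      curry (bApp (tmulBil (cwArr q) ψ) u v) a = bApp ψ w x ∧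
        curry (bApp (tmulBil (cwArr q) ψ) u v) b = bApp ψ w y := by
  by_cases h0 : curry u 0 = 0
  · obtain ⟨c, hc⟩ : ∃ c, curry u c ≠ 0 := by
      by_contra! h
      exact hu (funext fun p => congrFun (h p.1) p.2)
    have hc0 : c ≠ 0 := by
      rintro rfl
      exact hc h0
    refine ⟨0, c, curry u c, hc, fun x y => ⟨uncurry (Pi.single c x + Pi.single 0 y), ?_, ?_⟩⟩
    · rw [curry_bApp_tmulBil_cwArr_zero, Finset.sum_eq_single c]
      · simp [hc0]
      · intro i _ hic
        simp_all
      · simp [hc0]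
    · simp [curry_bApp_tmulBil_cwArr_of_ne_zero _ _ _ hc0, h0, hc0]
  · let a : Fin (q + 1) := ⟨1, by omega⟩
    let b : Fin (q + 1) := ⟨2, by omega⟩
    have ha : a ≠ 0 := by simp [a, Fin.ext_iff]
    have hb : b ≠ 0 := by simp [b, Fin.ext_iff]
    have hab : a ≠ b := by simp [a, b, Fin.ext_iff]
    refine ⟨a, b, curry u 0, h0, fun x y => ⟨uncurry (Pi.single a x + Pi.single b y), ?_, ?_⟩⟩
    · simp [curry_bApp_tmulBil_cwArr_of_ne_zero _ _ _ ha, ha, hb, hab]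
    · simp [curry_bApp_tmulBil_cwArr_of_ne_zero _ _ _ hb, ha, hb, hab.symm]

end CoppersmithWinograd

/-- for `q ≥ 2` and any bilinear map `ψ : U × V → W` with
`U ≠ 0`, `m(φ_cw ⊗ ψ) ≥ 2 m(ψ)`. -/
theorem stmt11 (q : ℕ) (hq : 2 ≤ q) {I J K : Type*}
    [Fintype I] [Fintype J] [Nonempty I] (ψ : I → J → K → ℂ) :
    2 * mval ψ ≤ mval (tmulBil (cwArr q) ψ) := by
  apply le_csInf
  · obtain ⟨u, hu⟩ := exists_ne (0 : Fin (q + 1) × I → ℂ)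
    exact ⟨_, u, hu, rfl⟩
  · rintro _ ⟨u, hu, rfl⟩
    obtain ⟨a, b, w, hw, hblocks⟩ := exists_blocks_curry_bApp_tmulBil_cwArr hq ψ u hu
    calc 2 * mval ψ ≤ 2 * finrank ℂ (span ℂ (Set.range (bApp ψ w))) :=
          Nat.mul_le_mul_left 2 (Nat.sInf_le ⟨w, hw, rfl⟩)
      _ ≤ _ := two_mul_finrank_le_of_forall_exists_curry_eq _ ψ u w a b hblocks
end
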